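/- arXiv:2104.03771 — 2 statements merged into one kernel-verified Lean document; each statement's English description precedes it below -/
import Mathlib

section
/- Let Λ > 0, H = √(Λ/3), å > 0, and φ̊ ∈ ℝ. Define a(t) = å·(√(φ̊²/Λ + 1)·sinh(√(3Λ)·t) + cosh(√(3Λ)·t))^(1/3) for t ≥ 0. Then a(t) > 0 for all t ≥ 0 and the limit lim_{t→∞} e^{-Ht} a(t) = å·((1/2)·√(φ̊²/Λ + 1) + 1/2)^(1/3) holds. -/
open Real Filter

/-- positivity of the FLRW scale factor and its leading asymptotics. -/
theorem flrw_scale_factor_pos_and_limit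
    (Λ H a0 φ : ℝ) (hΛ : 0 < Λ) (hH : H = Real.sqrt (Λ / 3)) (ha0 : 0 < a0)
    (a : ℝ → ℝ)
    (ha : ∀ t, a t = a0 * (Real.sqrt (φ ^ 2 / Λ + 1) * Real.sinh (Real.sqrt (3 * Λ) * t)
        + Real.cosh (Real.sqrt (3 * Λ) * t)) ^ ((1 : ℝ) / 3)) :
    (∀ t, 0 ≤ t → 0 < a t) ∧
      Tendsto (fun t => Real.exp (-H * t) * a t) atTop
        (nhds (a0 * ((1 / 2) * Real.sqrt (φ ^ 2 / Λ + 1) + 1 / 2) ^ ((1 : ℝ) / 3))) := by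
  set c := Real.sqrt (φ ^ 2 / Λ + 1) with hc
  set s := Real.sqrt (3 * Λ) with hs
  have hs_pos : 0 < s := Real.sqrt_pos.2 (by linarith)
  have hc1 : 1 ≤ c := by
    have h1 : Real.sqrt 1 ≤ c := by
      rw [hc]
      exact Real.sqrt_le_sqrt (by have := div_nonneg (sq_nonneg φ) hΛ.le; linarith)
    rwa [Real.sqrt_one] at h1
  have hc0 : 0 ≤ c := by linarith
  have hf : ∀ t, 0 ≤ t → 0 < c * Real.sinh (s * t) + Real.cosh (s * t) := by
    intro t ht
    have h1 : 0 ≤ Real.sinh (s * t) := Real.sinh_nonneg_iff.2 (by positivity)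
    have h2 : 0 < Real.cosh (s * t) := Real.cosh_pos _
    nlinarith
  constructor
  · intro t ht
    rw [ha t]
    have := hf t ht
    positivity
  · have hH_pos : 0 < H := by rw [hH]; exact Real.sqrt_pos.2 (by positivity)
    have h3H : s = 3 * H := by
      rw [hH, hs, show (3:ℝ) * Λ = 3^2 * (Λ/3) by ring,
        Real.sqrt_mul (by norm_num), Real.sqrt_sq (by norm_num)]
    have hg : ∀ t, Real.exp (-s * t) * (c * Real.sinh (s * t) + Real.cosh (s * t))
        = c * (1 - Real.exp (-(2*s) * t)) / 2 + (1 + Real.exp (-(2*s) * t)) / 2 := by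
      intro t
      have hE : (0:ℝ) < Real.exp (s * t) := Real.exp_pos _
      have e1 : Real.exp (-s * t) = (Real.exp (s*t))⁻¹ := by
        rw [← Real.exp_neg]; ring_nf
      have e2 : Real.exp (-(s*t)) = (Real.exp (s*t))⁻¹ := Real.exp_neg _
      have e3 : Real.exp (-(2*s) * t) = ((Real.exp (s*t))^2)⁻¹ := by
        rw [sq, ← Real.exp_add, ← Real.exp_neg]; congr 1; ring
      rw [Real.sinh_eq, Real.cosh_eq, e1, e2, e3]
      field_simp
    have hexp0 : Tendsto (fun t => Real.exp (-(2*s) * t)) atTop (nhds 0) := by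
      have h1 : Tendsto (fun t : ℝ => 2 * s * t) atTop atTop :=
        Tendsto.const_mul_atTop (by positivity) tendsto_id
      have := Real.tendsto_exp_neg_atTop_nhds_zero.comp h1
      refine this.congr (fun t => ?_)
      simp only [Function.comp_apply]; congr 1; ring
    have hglim : Tendsto (fun t => c * (1 - Real.exp (-(2*s) * t)) / 2
        + (1 + Real.exp (-(2*s) * t)) / 2) atTop (nhds ((1/2) * c + 1/2)) := by
      have h1 : Tendsto (fun t => c * (1 - Real.exp (-(2*s) * t)) / 2
          + (1 + Real.exp (-(2*s) * t)) / 2) atTop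
          (nhds (c * (1 - 0) / 2 + (1 + 0) / 2)) := by
        exact (((tendsto_const_nhds.sub hexp0).const_mul c).div_const 2).add
          ((tendsto_const_nhds.add hexp0).div_const 2)
      convert h1 using 2; ring
    have hL : (0:ℝ) < (1/2) * c + 1/2 := by linarith
    have hmain : Tendsto (fun t => a0 * (Real.exp (-s * t) *
        (c * Real.sinh (s * t) + Real.cosh (s * t))) ^ ((1:ℝ)/3)) atTop
        (nhds (a0 * ((1/2) * c + 1/2) ^ ((1:ℝ)/3))) := by
      have := (hglim.rpow_const (p := (1:ℝ)/3) (Or.inl (ne_of_gt hL))).const_mul a0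
      refine this.congr (fun t => ?_)
      rw [hg t]
    refine hmain.congr' ?_
    filter_upwards [eventually_ge_atTop (0:ℝ)] with t ht
    rw [ha t]
    have hfnn : 0 ≤ c * Real.sinh (s * t) + Real.cosh (s * t) := (hf t ht).le
    rw [Real.mul_rpow (Real.exp_pos _).le hfnn, ← Real.exp_mul]
    have : -s * t * (1/3) = -H * t := by rw [h3H]; ring
    rw [this]; ring
end

section
/- Let H > 0, C₀ ≥ 0, F ∈ ℝ, and let f : [0,∞) → ℝ be a C¹ function satisfying |f'(t) + 3H·f(t) - H·F·e^{-2Ht}| ≤ C₀·e^{-4Ht} for all t ≥ 0. Then the limit L = lim_{t→∞} e^{3Ht}·(f(t) - F·e^{-2Ht}) exists, and |f(t) - F·e^{-2Ht} - L·e^{-3Ht}| ≤ (C₀/H)·e^{-4Ht} for all t ≥ 0. -/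
/-!
With the integrating factor, `u t = exp (3 H t) * (f t - F * exp (-2 H t))` has derivative
`exp (3 H t) * (f' + 3 H f - H F exp (-2 H t))`, of size at most `C₀ * exp (-H t)`, which is
`-φ'` for `φ t = (C₀ / H) * exp (-H t)`. Comparing with `φ` on `[t, s]` gives
`|u s - u t| ≤ φ t - φ s`, so `u` is Cauchy at infinity, and its limit `L` satisfies
`|u t - L| ≤ φ t`; multiplying by `exp (-3 H t)` gives the expansion.
-/

open Real Filter Set Topology

section DerivBoundary

variable {E : Type*} [NormedAddCommGroup E] [NormedSpace ℝ E]
  {u u' : ℝ → E} {φ φ' : ℝ → ℝ} {a : ℝ}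

theorem norm_sub_le_sub_of_norm_deriv_le_neg_deriv
    (hu : ∀ x ≥ a, HasDerivAt u (u' x) x) (hφ : ∀ x ≥ a, HasDerivAt φ (φ' x) x)
    (bound : ∀ x ≥ a, ‖u' x‖ ≤ -φ' x) {t s : ℝ} (ht : a ≤ t) (hts : t ≤ s) :
    ‖u s - u t‖ ≤ φ t - φ s := by
  have hu' : ∀ x ∈ Icc t s, HasDerivAt (fun y => u y - u t) (u' x) x := fun x hx =>
    (hu x (ht.trans hx.1)).sub_const _
  have hB : ∀ x ∈ Icc t s, HasDerivAt (fun y => φ t - φ y) (-φ' x) x := fun x hx =>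
    (hφ x (ht.trans hx.1)).const_sub _
  refine image_norm_le_of_norm_deriv_right_le_deriv_boundary'
    (fun x hx => (hu' x hx).continuousAt.continuousWithinAt)
    (fun x hx => (hu' x (Ico_subset_Icc_self hx)).hasDerivWithinAt) (by simp)
    (fun x hx => (hB x hx).continuousAt.continuousWithinAt)
    (fun x hx => (hB x (Ico_subset_Icc_self hx)).hasDerivWithinAt)
    (fun x hx => bound x (ht.trans hx.1)) (right_mem_Icc.2 hts)

theorem exists_tendsto_norm_sub_le_of_norm_deriv_le_neg_deriv [CompleteSpace E]
    (hu : ∀ x ≥ a, HasDerivAt u (u' x) x) (hφ : ∀ x ≥ a, HasDerivAt φ (φ' x) x)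
    (bound : ∀ x ≥ a, ‖u' x‖ ≤ -φ' x) (hφ_lim : Tendsto φ atTop (𝓝 0)) :
    ∃ L, Tendsto u atTop (𝓝 L) ∧ ∀ t ≥ a, ‖u t - L‖ ≤ φ t := by
  have hosc : ∀ t ≥ a, ∀ s ≥ t, ‖u s - u t‖ ≤ φ t - φ s := fun t ht s hs =>
    norm_sub_le_sub_of_norm_deriv_le_neg_deriv hu hφ bound ht hs
  have hcauchy : CauchySeq u := by
    refine Metric.cauchySeq_iff'.2 fun ε hε => ?_
    obtain ⟨N, hN⟩ := eventually_atTop.1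
      (eventually_ge_atTop a |>.and (hφ_lim.eventually (Metric.ball_mem_nhds 0 (half_pos hε))))
    refine ⟨N, fun n hn => ?_⟩
    have hφN := (hN N le_rfl).2
    have hφn := (hN n hn).2
    rw [Real.dist_eq, sub_zero, abs_lt] at hφN hφn
    calc dist (u n) (u N) = ‖u n - u N‖ := dist_eq_norm _ _
      _ ≤ φ N - φ n := hosc N (hN N le_rfl).1 n hn
      _ < ε := by linarith
  obtain ⟨L, hL⟩ := cauchySeq_tendsto_of_complete hcauchy
  refine ⟨L, hL, fun t ht => ?_⟩
  have hlim : Tendsto (fun s => ‖u s - u t‖) atTop (𝓝 ‖L - u t‖) :=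
    (hL.sub_const _).norm
  rw [norm_sub_rev]
  refine le_of_tendsto_of_tendsto hlim (tendsto_const_nhds.sub hφ_lim) ?_ |>.trans_eq (sub_zero _)
  filter_upwards [eventually_ge_atTop t] with s hs using hosc t ht s hs

end DerivBoundary

theorem hasDerivAt_exp_const_mul (c t : ℝ) :
    HasDerivAt (fun t => exp (c * t)) (c * exp (c * t)) t := by
  simpa [mul_comm] using ((hasDerivAt_id t).const_mul c).exp

theorem hasDerivAt_exp_mul_sub_const_mul_exp {f : ℝ → ℝ} {f' t : ℝ} (hf : HasDerivAt f f' t)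
    (H F : ℝ) :
    HasDerivAt (fun t => exp (3 * H * t) * (f t - F * exp (-2 * H * t)))
      (exp (3 * H * t) * (f' + 3 * H * f t - H * F * exp (-2 * H * t))) t := by
  refine ((hasDerivAt_exp_const_mul (3 * H) t).mul
    (hf.sub ((hasDerivAt_exp_const_mul (-2 * H) t).const_mul F))).congr_deriv ?_
  simp only [Pi.sub_apply]
  ring

theorem hasDerivAt_div_mul_exp_neg_mul {H : ℝ} (hH : H ≠ 0) (C t : ℝ) :
    HasDerivAt (fun t => C / H * exp (-H * t)) (-(C * exp (-H * t))) t := by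
  refine ((hasDerivAt_exp_const_mul (-H) t).const_mul (C / H)).congr_deriv ?_
  field_simp

theorem ode_two_term_expansion_general
    (H C₀ F : ℝ) (hH : 0 < H)
    (f : ℝ → ℝ) (hf : ContDiff ℝ 1 f)
    (hf' : ∀ t, 0 ≤ t →
      |deriv f t + 3 * H * f t - H * F * Real.exp (-2 * H * t)|
        ≤ C₀ * Real.exp (-4 * H * t)) :
    ∃ L : ℝ,
      Tendsto (fun t => Real.exp (3 * H * t) * (f t - F * Real.exp (-2 * H * t)))
        atTop (nhds L) ∧
      ∀ t, 0 ≤ t →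
        |f t - F * Real.exp (-2 * H * t) - L * Real.exp (-3 * H * t)|
          ≤ (C₀ / H) * Real.exp (-4 * H * t) := by
  have bound : ∀ t ≥ 0,
      ‖exp (3 * H * t) * (deriv f t + 3 * H * f t - H * F * exp (-2 * H * t))‖
        ≤ -(-(C₀ * exp (-H * t))) := fun t ht => by
    rw [neg_neg, norm_mul, norm_of_nonneg (exp_pos _).le, Real.norm_eq_abs,
      show -H * t = 3 * H * t + -4 * H * t by ring, exp_add, mul_left_comm]
    gcongr
    exact hf' t ht
  have hφ_lim : Tendsto (fun t => C₀ / H * exp (-H * t)) atTop (𝓝 0) := by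
    simpa using ((tendsto_exp_neg_atTop_nhds_zero.comp
      (tendsto_id.const_mul_atTop hH)).const_mul (C₀ / H))
  have hf_deriv : ∀ t, HasDerivAt f (deriv f t) t := fun t =>
    (hf.differentiable one_ne_zero t).hasDerivAt
  obtain ⟨L, hL, hL_bound⟩ := exists_tendsto_norm_sub_le_of_norm_deriv_le_neg_deriv
    (fun t _ => hasDerivAt_exp_mul_sub_const_mul_exp (hf_deriv t) H F)
    (fun t _ => hasDerivAt_div_mul_exp_neg_mul hH.ne' C₀ t) bound hφ_lim
  refine ⟨L, hL, fun t ht => ?_⟩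
  have hdecomp : f t - F * exp (-2 * H * t) - L * exp (-3 * H * t)
      = exp (-3 * H * t) * (exp (3 * H * t) * (f t - F * exp (-2 * H * t)) - L) := by
    rw [mul_sub, ← mul_assoc, ← exp_add, show -3 * H * t + 3 * H * t = 0 by ring, exp_zero,
      one_mul]
    ring
  rw [hdecomp, abs_mul, abs_of_pos (exp_pos _), ← Real.norm_eq_abs,
    show -4 * H * t = -3 * H * t + -H * t by ring, exp_add, mul_left_comm]
  gcongr
  exact hL_bound t ht

/-- two-term asymptotic expansion ODE lemma. -/
theorem ode_two_term_expansion
    (H C₀ F : ℝ) (hH : 0 < H) (hC : 0 ≤ C₀)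
    (f : ℝ → ℝ) (hf : ContDiff ℝ 1 f)
    (hf' : ∀ t, 0 ≤ t →
      |deriv f t + 3 * H * f t - H * F * Real.exp (-2 * H * t)|
        ≤ C₀ * Real.exp (-4 * H * t)) :
    ∃ L : ℝ,
      Tendsto (fun t => Real.exp (3 * H * t) * (f t - F * Real.exp (-2 * H * t)))
        atTop (nhds L) ∧
      ∀ t, 0 ≤ t →
        |f t - F * Real.exp (-2 * H * t) - L * Real.exp (-3 * H * t)|
          ≤ (C₀ / H) * Real.exp (-4 * H * t) :=
  ode_two_term_expansion_general H C₀ F hH f hf hf'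
end
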